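/- arXiv:1801.09158 — 9 statements merged into one kernel-verified Lean document; each statement's English description precedes it below -/
import Mathlib

section
/- Let φ: ℝ → ℝ be a twice continuously differentiable convex function with φ'' > 0. Define the Rényi-type Bregman divergence D_{1+s}(θ‖θ̄) := (φ((1+s)θ - sθ̄) - (1+s)φ(θ) + sφ(θ̄))/s for s > 0. Then for fixed θ ≠ θ̄, the function s ↦ D_{1+s}(θ‖θ̄) is strictly monotonically increasing on (0,∞). -/
/-!
Writing `u = θ - θbar`, the numerator splits as `(φ (θ + s u) - φ θ) - s (φ θ - φ θbar)`, so
`D_{1+s}(θ‖θbar)` is the secant slope of `s ↦ φ (θ + s u)` between `0` and `s`, minus a constant.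
Since `φ'' > 0`, `φ` is strictly convex, hence so is its restriction to the line through `θ` in
direction `u ≠ 0`, and secant slopes of a strictly convex function strictly increase.
-/

open Set

theorem StrictConvexOn.comp_add_smul {𝕜 E β : Type*} [Field 𝕜] [LinearOrder 𝕜]
    [AddCommGroup E] [Module 𝕜 E] [AddCommMonoid β] [PartialOrder β] [SMul 𝕜 β] {f : E → β}
    (hf : StrictConvexOn 𝕜 univ f) (x : E) {u : E} (hu : u ≠ 0) : StrictConvexOn 𝕜 univ fun s : 𝕜 => f (x + s • u) := by
  refine ⟨convex_univ, fun s _ t _ hst a b ha hb hab => ?_⟩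
  have hne : x + s • u ≠ x + t • u := by
    simpa only [ne_eq, add_right_inj, smul_left_inj hu] using hst
  convert hf.2 trivial trivial hne ha hb hab using 2
  rw [smul_add, smul_add, add_add_add_comm, Convex.combo_self hab, add_smul, smul_assoc, smul_assoc]

theorem StrictConvexOn.strictMonoOn_slope {𝕜 : Type*} [Field 𝕜] [LinearOrder 𝕜]
    [IsStrictOrderedRing 𝕜] {s : Set 𝕜} {f : 𝕜 → 𝕜} {x : 𝕜} (hf : StrictConvexOn 𝕜 s f)
    (hx : x ∈ s) : StrictMonoOn (slope f x) (s \ {x}) :=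
  (slope_fun_def_field f _).symm ▸ fun _ hy _ hz hyz => hf.secant_strict_mono hx
    (mem_of_mem_sdiff hy) (mem_of_mem_sdiff hz) (notMem_of_mem_sdiff hy :) (notMem_of_mem_sdiff hz :) hyz

theorem renyi_bregman_strict_mono_general
    (φ : ℝ → ℝ) (hφ : ContDiff ℝ 2 φ)
    (hpos : ∀ x, 0 < deriv (deriv φ) x)
    (θ θbar : ℝ) (hne : θ ≠ θbar) :
    StrictMonoOn
      (fun s => (φ ((1 + s) * θ - s * θbar) - (1 + s) * φ θ + s * φ θbar) / s)
      (Set.Ioi (0 : ℝ)) := by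
  have hφ_strict : StrictConvexOn ℝ univ φ :=
    strictConvexOn_univ_of_deriv2_pos hφ.continuous hpos
  set g : ℝ → ℝ := fun s => φ (θ + s • (θ - θbar))
  have hg : StrictMonoOn (slope g 0) (univ \ {0}) :=
    (hφ_strict.comp_add_smul θ (sub_ne_zero.2 hne)).strictMonoOn_slope (mem_univ 0)
  have hD : ∀ s ∈ Ioi (0 : ℝ),
      (φ ((1 + s) * θ - s * θbar) - (1 + s) * φ θ + s * φ θbar) / s
        = slope g 0 s - (φ θ - φ θbar) := by
    intro s (hs : 0 < s)
    have harg : (1 + s) * θ - s * θbar = θ + s * (θ - θbar) := by ring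
    simp only [slope_def_field, g, harg, smul_eq_mul, zero_mul, add_zero, sub_zero]
    field_simp
    ring
  intro a ha b hb hab
  simp only [hD a ha, hD b hb]
  linarith [hg ⟨trivial, ne_of_gt ha⟩ ⟨trivial, ne_of_gt hb⟩ hab]

theorem renyi_bregman_strict_mono
    (φ : ℝ → ℝ) (hφ : ContDiff ℝ 2 φ) (hconv : ConvexOn ℝ Set.univ φ)
    (hpos : ∀ x, 0 < deriv (deriv φ) x)
    (θ θbar : ℝ) (hne : θ ≠ θbar) :
    StrictMonoOn
      (fun s => (φ ((1 + s) * θ - s * θbar) - (1 + s) * φ θ + s * φ θbar) / s)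
      (Set.Ioi (0 : ℝ)) :=
  renyi_bregman_strict_mono_general φ hφ hpos θ θbar hne
end

section
/- Let φ: ℝ → ℝ be a differentiable strictly convex function whose derivative φ' is a bijection onto ℝ, with inverse (φ')⁻¹. If a > φ'(0), then inf over s > 0 and θ > (φ')⁻¹(a) of [φ((1+s)θ) - (1+s)φ(θ)]/s equals (φ')⁻¹(a)·a - φ((φ')⁻¹(a)), which also equals sup_{θ ≥ 0}[θa - φ(θ)]. -/
open Filter Topology Set

/-- Tangent line inequality for a differentiable function with strictly
monotone derivative. -/
lemma tangent_le_aux (φ : ℝ → ℝ) (hφ : Differentiable ℝ φ)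
    (hmono : StrictMono (deriv φ)) (x y : ℝ) :
    φ x + deriv φ x * (y - x) ≤ φ y := by
  rcases lt_trichotomy x y with h | h | h
  · obtain ⟨c, hc, hd⟩ := exists_deriv_eq_slope φ h hφ.continuous.continuousOn
      hφ.differentiableOn
    rw [eq_div_iff (by linarith : y - x ≠ 0)] at hd
    have h1 : deriv φ x ≤ deriv φ c := (hmono hc.1).le
    nlinarith [mul_le_mul_of_nonneg_right h1 (by linarith : (0:ℝ) ≤ y - x)]
  · simp [h]
  · obtain ⟨c, hc, hd⟩ := exists_deriv_eq_slope φ h hφ.continuous.continuousOn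
      hφ.differentiableOn
    rw [eq_div_iff (by linarith : x - y ≠ 0)] at hd
    have h1 : deriv φ c ≤ deriv φ x := (hmono hc.2).le
    nlinarith [mul_le_mul_of_nonneg_right h1 (by linarith : (0:ℝ) ≤ x - y)]

theorem inf_renyi_eq_legendre_of_gt
    (φ : ℝ → ℝ) (hφ : Differentiable ℝ φ) (hconv : StrictConvexOn ℝ Set.univ φ)
    (hmono : StrictMono (deriv φ)) (hbij : Function.Bijective (deriv φ))
    (g : ℝ → ℝ) (hg₁ : Function.LeftInverse g (deriv φ))
    (hg₂ : Function.RightInverse g (deriv φ))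
    (a : ℝ) (ha : deriv φ 0 < a) :
    sInf {y | ∃ s > (0 : ℝ), ∃ θ > g a,
        y = (φ ((1 + s) * θ) - (1 + s) * φ θ) / s}
      = g a * a - φ (g a) ∧
    g a * a - φ (g a) = sSup {y | ∃ θ ≥ (0 : ℝ), y = θ * a - φ θ} := by
  set t := g a with htdef
  have hta : deriv φ t = a := hg₂ a
  have ht0 : 0 < t := hmono.lt_iff_lt.mp (by rw [hta]; exact ha)
  -- key inequality: θ a - φ θ ≤ t a - φ t for all θ
  have hkey : ∀ θ : ℝ, θ * a - φ θ ≤ t * a - φ t := by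
    intro θ
    have := tangent_le_aux φ hφ hmono t θ
    rw [hta] at this
    nlinarith
  -- lower bound on the set elements
  have hlow : ∀ s > (0:ℝ), ∀ θ > t,
      t * a - φ t ≤ (φ ((1 + s) * θ) - (1 + s) * φ θ) / s := by
    intro s hs θ hθ
    have hθ0 : 0 < θ := ht0.trans hθ
    have hφθ : a ≤ deriv φ θ := by rw [← hta]; exact (hmono hθ).le
    have htan := tangent_le_aux φ hφ hmono θ ((1 + s) * θ)
    rw [le_div_iff₀ hs]
    have htan2 := tangent_le_aux φ hφ hmono θ t
    nlinarith [mul_le_mul_of_nonneg_right htan2 hs.le,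
      mul_le_mul_of_nonneg_right hφθ (by positivity : (0:ℝ) ≤ t * s)]
  set S := {y | ∃ s > (0 : ℝ), ∃ θ > t,
      y = (φ ((1 + s) * θ) - (1 + s) * φ θ) / s} with hSdef
  have hSne : S.Nonempty :=
    ⟨(φ ((1 + 1) * (t + 1)) - (1 + 1) * φ (t + 1)) / 1,
      1, one_pos, t + 1, by linarith, rfl⟩
  have hSbdd : BddBelow S := by
    refine ⟨t * a - φ t, ?_⟩
    rintro y ⟨s, hs, θ, hθ, rfl⟩
    exact hlow s hs θ hθ
  have hcont : Continuous (deriv φ) := by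
    have := (hmono.orderIsoOfSurjective _ hbij.2).continuous
    exact this
  constructor
  · apply le_antisymm
    · rw [Real.sInf_le_iff hSbdd hSne]
      intro ε hε
      -- choose θ > t with θ * deriv φ θ - φ θ < t*a - φ t + ε/2
      have hLcont : ContinuousAt (fun θ : ℝ => θ * deriv φ θ - φ θ) t :=
        ((continuous_id.mul hcont).sub hφ.continuous).continuousAt
      have hLt : Tendsto (fun θ : ℝ => θ * deriv φ θ - φ θ) (𝓝[>] t)
          (𝓝 (t * a - φ t)) := by
        have := tendsto_nhdsWithin_of_tendsto_nhds (s := Ioi t) hLcont.tendsto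
        rwa [hta] at this
      have hev : ∀ᶠ θ in 𝓝[>] t,
          θ * deriv φ θ - φ θ < t * a - φ t + ε / 2 :=
        hLt.eventually_lt_const (by linarith)
      obtain ⟨θ, hθlt, hθmem⟩ := (hev.and self_mem_nhdsWithin).exists
      have hθt : t < θ := hθmem
      have hθ0 : 0 < θ := ht0.trans hθt
      -- slope limit as s → 0⁺
      have hder : HasDerivAt φ (deriv φ θ) θ := (hφ θ).hasDerivAt
      have hslope : Tendsto (slope φ θ) (𝓝[≠] θ) (𝓝 (deriv φ θ)) :=
        hasDerivAt_iff_tendsto_slope.mp hder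
      have hm : Tendsto (fun s : ℝ => (1 + s) * θ) (𝓝[>] 0) (𝓝[≠] θ) := by
        rw [tendsto_nhdsWithin_iff]
        constructor
        · have hc : Tendsto (fun s : ℝ => (1 + s) * θ) (𝓝 0) (𝓝 ((1 + 0) * θ)) :=
            (((continuous_const.add continuous_id).mul continuous_const).tendsto 0)
          simpa using hc.mono_left nhdsWithin_le_nhds
        · filter_upwards [self_mem_nhdsWithin] with s hs
          have hs' : (0:ℝ) < s := hs
          simp only [mem_compl_iff, mem_singleton_iff]
          nlinarith
      have hE : Tendsto (fun s : ℝ => (φ ((1 + s) * θ) - (1 + s) * φ θ) / s)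
          (𝓝[>] 0) (𝓝 (θ * deriv φ θ - φ θ)) := by
        have h1 : Tendsto (fun s : ℝ => θ * slope φ θ ((1 + s) * θ) - φ θ)
            (𝓝[>] 0) (𝓝 (θ * deriv φ θ - φ θ)) :=
          (tendsto_const_nhds.mul (hslope.comp hm)).sub tendsto_const_nhds
        refine h1.congr' ?_
        filter_upwards [self_mem_nhdsWithin] with s hs
        have hs' : (0:ℝ) < s := hs
        rw [slope_def_field]
        have : (1 + s) * θ - θ = s * θ := by ring
        rw [this]
        field_simp
        ring
      have hev2 : ∀ᶠ s in 𝓝[>] (0:ℝ),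
          (φ ((1 + s) * θ) - (1 + s) * φ θ) / s < t * a - φ t + ε :=
        hE.eventually_lt_const (by linarith)
      obtain ⟨s, hslt, hsmem⟩ := (hev2.and self_mem_nhdsWithin).exists
      exact ⟨(φ ((1 + s) * θ) - (1 + s) * φ θ) / s,
        ⟨s, hsmem, θ, hθt, rfl⟩, hslt⟩
    · apply le_csInf hSne
      rintro y ⟨s, hs, θ, hθ, rfl⟩
      exact hlow s hs θ hθ
  · symm
    apply IsGreatest.csSup_eq
    constructor
    · exact ⟨t, ht0.le, rfl⟩
    · rintro y ⟨θ, hθ, rfl⟩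
      exact hkey θ
end

section
/- Let φ: ℝ → ℝ be a differentiable strictly convex function whose derivative φ' is a bijection onto ℝ, with inverse (φ')⁻¹. If a < φ'(0), then inf over s > 0 and θ < (φ')⁻¹(a) of [φ((1+s)θ) - (1+s)φ(θ)]/s equals (φ')⁻¹(a)·a - φ((φ')⁻¹(a)), which also equals sup_{θ ≤ 0}[θa - φ(θ)]. -/
open Set

theorem inf_renyi_eq_legendre_of_lt
    (φ : ℝ → ℝ) (hφ : Differentiable ℝ φ) (hconv : StrictConvexOn ℝ Set.univ φ)
    (hmono : StrictMono (deriv φ)) (hbij : Function.Bijective (deriv φ))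
    (g : ℝ → ℝ) (hg₁ : Function.LeftInverse g (deriv φ))
    (hg₂ : Function.RightInverse g (deriv φ))
    (a : ℝ) (ha : a < deriv φ 0) :
    sInf {y | ∃ s > (0 : ℝ), ∃ θ < g a,
        y = (φ ((1 + s) * θ) - (1 + s) * φ θ) / s}
      = g a * a - φ (g a) ∧
    g a * a - φ (g a) = sSup {y | ∃ θ ≤ (0 : ℝ), y = θ * a - φ θ} := by
  -- Mean value theorem helper
  have mvt : ∀ x y : ℝ, x < y → ∃ c ∈ Ioo x y,
      deriv φ c * (y - x) = φ y - φ x := by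
    intro x y hxy
    obtain ⟨c, hc, hceq⟩ := exists_deriv_eq_slope φ hxy hφ.continuous.continuousOn
      hφ.differentiableOn
    refine ⟨c, hc, ?_⟩
    rw [hceq, div_mul_cancel₀ _ (by linarith : y - x ≠ 0)]
  -- Tangent line inequality
  have tangent : ∀ x y : ℝ, deriv φ x * (y - x) ≤ φ y - φ x := by
    intro x y
    rcases lt_trichotomy x y with h | h | h
    · obtain ⟨c, hc, hceq⟩ := mvt x y h
      have h1 : deriv φ x < deriv φ c := hmono hc.1
      nlinarith
    · simp [h]
    · obtain ⟨c, hc, hceq⟩ := mvt y x h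
      have h1 : deriv φ c < deriv φ x := hmono hc.2
      nlinarith
  set b := g a with hbdef
  have hb : deriv φ b = a := hg₂ a
  have hbneg : b < 0 := by
    have := hmono.lt_iff_lt (a := b) (b := 0)
    rw [hb] at this
    exact this.mp ha
  -- continuity of deriv φ
  have hcd : Continuous (deriv φ) := by
    have h := (StrictMono.orderIsoOfSurjective (deriv φ) hmono hbij.2).toHomeomorph.continuous
    have he : ⇑(StrictMono.orderIsoOfSurjective (deriv φ) hmono hbij.2).toHomeomorph
        = deriv φ := rfl
    rwa [he] at h
  set S : Set ℝ := {y | ∃ s > (0 : ℝ), ∃ θ < g a,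
      y = (φ ((1 + s) * θ) - (1 + s) * φ θ) / s} with hSdef
  -- lower bound on S
  have hlb : ∀ y ∈ S, b * a - φ b ≤ y := by
    rintro y ⟨s, hs, θ, hθ, rfl⟩
    have hθ0 : θ < 0 := hθ.trans hbneg
    have hu : (1 + s) * θ < θ := by nlinarith
    obtain ⟨d, hd, hdeq⟩ := mvt ((1 + s) * θ) θ hu
    have hd1 : deriv φ d < deriv φ θ := hmono hd.2
    have hθa : deriv φ θ < a := by rw [← hb]; exact hmono hθ
    have htan := tangent θ b
    rw [le_div_iff₀ hs]
    nlinarith [mul_pos (neg_pos.mpr hθ0) (sub_pos.mpr hd1),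
      mul_pos (neg_pos.mpr hbneg) (sub_pos.mpr hθa),
      mul_nonneg (mul_pos (neg_pos.mpr hθ0) (sub_pos.mpr hd1)).le hs.le,
      mul_nonneg (mul_pos (neg_pos.mpr hbneg) (sub_pos.mpr hθa)).le hs.le,
      mul_le_mul_of_nonneg_right htan hs.le]
  have hSne : S.Nonempty := by
    refine ⟨(φ ((1 + 1) * (b - 1)) - (1 + 1) * φ (b - 1)) / 1, 1, one_pos, b - 1, by linarith, rfl⟩
  have hbdd : BddBelow S := ⟨b * a - φ b, hlb⟩
  -- approximation from above
  have hub : ∀ ε > (0 : ℝ), ∃ y ∈ S, y < b * a - φ b + ε := by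
    intro ε hε
    have hh : ContinuousAt (fun t : ℝ => t * deriv φ t - φ t) b :=
      ((continuous_id.mul hcd).sub hφ.continuous).continuousAt
    have hhb : (fun t : ℝ => t * deriv φ t - φ t) b < b * a - φ b + ε / 2 := by
      simp only [hb]; linarith
    have h1 : {t : ℝ | t * deriv φ t - φ t < b * a - φ b + ε / 2} ∈ nhds b :=
      hh (Iio_mem_nhds hhb)
    obtain ⟨δ, hδ, hball⟩ := Metric.mem_nhds_iff.mp h1
    set θ : ℝ := b - δ / 2 with hθdef
    have hθb : θ < b := by simp [hθdef]; linarith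
    have hθball : θ ∈ Metric.ball b δ := by
      rw [Metric.mem_ball, Real.dist_eq]
      have h4 : θ - b = -(δ / 2) := by rw [hθdef]; ring
      rw [h4, abs_neg, abs_of_pos (by linarith)]
      linarith
    have hθval : θ * deriv φ θ - φ θ < b * a - φ b + ε / 2 := hball hθball
    have hθ0 : θ < 0 := hθb.trans hbneg
    -- second continuity at θ
    have hk : ContinuousAt (fun t : ℝ => θ * deriv φ t - φ θ) θ :=
      ((continuous_const.mul hcd).sub continuous_const).continuousAt
    have hkθ : (fun t : ℝ => θ * deriv φ t - φ θ) θ < b * a - φ b + ε / 2 := hθval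
    have h2 : {t : ℝ | θ * deriv φ t - φ θ < b * a - φ b + ε / 2} ∈ nhds θ :=
      hk (Iio_mem_nhds hkθ)
    obtain ⟨δ₂, hδ₂, hball₂⟩ := Metric.mem_nhds_iff.mp h2
    set s : ℝ := δ₂ / (2 * (-θ)) with hsdef
    have hs : 0 < s := div_pos hδ₂ (by linarith)
    have huθ : (1 + s) * θ < θ := by nlinarith
    have huball : (1 + s) * θ ∈ Metric.ball θ δ₂ := by
      rw [Metric.mem_ball, Real.dist_eq]
      have hθne : θ ≠ 0 := ne_of_lt hθ0
      have h4 : (1 + s) * θ - θ = s * θ := by ring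
      have h5 : -(s * θ) = δ₂ / 2 := by
        rw [hsdef]; field_simp
      rw [h4, abs_of_nonpos (by nlinarith [mul_pos hs (neg_pos.mpr hθ0)]), h5]
      linarith
    have huval : θ * deriv φ ((1 + s) * θ) - φ θ < b * a - φ b + ε / 2 := hball₂ huball
    obtain ⟨d, hd, hdeq⟩ := mvt ((1 + s) * θ) θ huθ
    have hud : deriv φ ((1 + s) * θ) < deriv φ d := hmono hd.1
    refine ⟨(φ ((1 + s) * θ) - (1 + s) * φ θ) / s, ⟨s, hs, θ, hθb, rfl⟩, ?_⟩
    rw [div_lt_iff₀ hs]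
    clear_value s θ b
    have h6 : θ * deriv φ d ≤ θ * deriv φ ((1 + s) * θ) :=
      mul_le_mul_of_nonpos_left hud.le hθ0.le
    have key : θ * deriv φ d - φ θ < b * a - φ b + ε := by linarith
    have h7 : φ ((1 + s) * θ) - (1 + s) * φ θ = (θ * deriv φ d - φ θ) * s := by
      linear_combination hdeq
    rw [h7]
    exact mul_lt_mul_of_pos_right key hs
  constructor
  · refine le_antisymm ?_ (le_csInf hSne hlb)
    refine le_of_forall_pos_le_add fun ε hε => ?_
    obtain ⟨y, hy, hylt⟩ := hub ε hε
    exact (csInf_le hbdd hy).trans hylt.le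
  · set S2 : Set ℝ := {y | ∃ θ ≤ (0 : ℝ), y = θ * a - φ θ} with hS2def
    have hmem : b * a - φ b ∈ S2 := ⟨b, hbneg.le, rfl⟩
    have hub2 : ∀ y ∈ S2, y ≤ b * a - φ b := by
      rintro y ⟨θ, _, rfl⟩
      have := tangent b θ
      rw [hb] at this
      nlinarith
    exact le_antisymm (le_csSup ⟨b * a - φ b, hub2⟩ hmem) (csSup_le ⟨_, hmem⟩ hub2)
end

section
/- Let Λ_θ be a family of linear maps on Hermitian matrices with Perron-Frobenius eigenvalue λ_θ, eigenvector ρ_θ of trace one, and adjoint eigenvector A_θ with A_θ ≥ I and A_θ - I not strictly positive definite. Let φ_{n,ρ}(θ) := log Tr Λ_θⁿ(ρ) for a state ρ. Then n·log λ_θ + log Tr(A_θ ρ) - log ‖A_θ‖ ≤ φ_{n,ρ}(θ) ≤ n·log λ_θ + log Tr(A_θ ρ). -/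
open scoped Matrix.Norms.L2Operator ComplexOrder

/-! Iterating the adjoint eigenvector relation gives `Tr(A Λⁿ ρ) = λⁿ Tr(A ρ)`. Since
`I ≤ A ≤ ‖A‖ I` and `Λⁿ ρ ≥ 0`, `X ↦ Tr(X Λⁿ ρ)` is monotone, so
`Tr(Λⁿ ρ) ≤ λⁿ Tr(A ρ) ≤ ‖A‖ Tr(Λⁿ ρ)`; taking logarithms gives both bounds. -/

namespace Matrix

variable {n : Type*}

lemma posSemidef_pow_apply {𝕜 : Type*} [RCLike 𝕜] {Λ : Module.End 𝕜 (Matrix n n 𝕜)}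
    (hΛ : ∀ X, X.PosSemidef → (Λ X).PosSemidef) (m : ℕ) {X : Matrix n n 𝕜} (hX : X.PosSemidef) :
    ((Λ ^ m) X).PosSemidef := by
  induction m with
  | zero => simpa using hX
  | succ k ih => rw [pow_succ', Module.End.mul_apply]; exact hΛ _ ih

variable [Fintype n]

lemma trace_mul_pow_apply {R : Type*} [CommSemiring R] {Λ : Module.End R (Matrix n n R)}
    {A : Matrix n n R} {c : R} (hA : ∀ X, (A * Λ X).trace = c * (A * X).trace) (m : ℕ)
    (X : Matrix n n R) : (A * (Λ ^ m) X).trace = c ^ m * (A * X).trace := by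
  induction m with
  | zero => simp
  | succ k ih => rw [pow_succ', Module.End.mul_apply, hA, ih, pow_succ', mul_assoc]

variable [DecidableEq n]

open scoped MatrixOrder

lemma trace_mul_nonneg {𝕜 : Type*} [RCLike 𝕜] {B C : Matrix n n 𝕜} (hB : B.PosSemidef)
    (hC : C.PosSemidef) : 0 ≤ (B * C).trace := by
  obtain ⟨b, rfl⟩ := CStarAlgebra.nonneg_iff_eq_star_mul_self.mp hB.nonneg
  rw [star_eq_conjTranspose, mul_assoc, trace_mul_comm]
  exact (hC.mul_mul_conjTranspose_same b).trace_nonneg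

lemma trace_mul_le_trace_mul {𝕜 : Type*} [RCLike 𝕜] {X Y S : Matrix n n 𝕜} (hXY : X ≤ Y)
    (hS : S.PosSemidef) : (X * S).trace ≤ (Y * S).trace := by
  have := trace_mul_nonneg hXY hS
  rwa [sub_mul, trace_sub, sub_nonneg] at this

lemma trace_mul_re_le_norm_mul_trace_re {A S : Matrix n n ℂ} (hA : A.IsHermitian)
    (hS : S.PosSemidef) : (A * S).trace.re ≤ ‖A‖ * S.trace.re := by
  have hle : A ≤ algebraMap ℝ _ ‖A‖ := IsSelfAdjoint.le_algebraMap_norm_self hA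
  simpa [Algebra.algebraMap_eq_smul_one] using (Complex.le_def.1 (trace_mul_le_trace_mul hle hS)).1

lemma trace_re_le_trace_mul_re {A S : Matrix n n ℂ} (hA : 1 ≤ A) (hS : S.PosSemidef) :
    S.trace.re ≤ (A * S).trace.re := by
  simpa using (Complex.le_def.1 (trace_mul_le_trace_mul hA hS)).1

end Matrix

lemma Real.log_sub_log_le_and_log_le {x y N : ℝ} (hN : 0 ≤ N) (hy : 0 < y) (hxy : x ≤ y)
    (hyx : y ≤ N * x) : Real.log y - Real.log N ≤ Real.log x ∧ Real.log x ≤ Real.log y := by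
  have hx : 0 < x := pos_of_mul_pos_right (hy.trans_le hyx) hN
  have hN' : 0 < N := pos_of_mul_pos_left (hy.trans_le hyx) hx.le
  refine ⟨?_, Real.log_le_log hx hxy⟩
  rw [← Real.log_div hy.ne' hN'.ne']
  exact Real.log_le_log (div_pos hy hN') ((div_le_iff₀' hN').2 hyx)

theorem cgf_finite_evaluation_general
    {d : ℕ} (Λ : Module.End ℂ (Matrix (Fin d) (Fin d) ℂ))
    (hpos : ∀ X : Matrix (Fin d) (Fin d) ℂ, X.PosSemidef → (Λ X).PosSemidef)
    (lam : ℝ) (hlam : 0 < lam)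
    (A : Matrix (Fin d) (Fin d) ℂ) (hA : A.IsHermitian)
    -- A is an eigenvector of the adjoint map Λ* with eigenvalue lam:
    (hAeig : ∀ X : Matrix (Fin d) (Fin d) ℂ, (A * Λ X).trace = (lam : ℂ) * (A * X).trace)
    -- A ≥ I but A - I is not strictly positive definite:
    (hAgeI : (A - 1).PosSemidef)
    (ρ : Matrix (Fin d) (Fin d) ℂ) (hρ : ρ.PosSemidef) (hρtr : ρ.trace = 1)
    (n : ℕ) :
    (n : ℝ) * Real.log lam + Real.log ((A * ρ).trace.re) - Real.log ‖A‖
        ≤ Real.log (((Λ ^ n) ρ).trace.re) ∧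
    Real.log (((Λ ^ n) ρ).trace.re)
        ≤ (n : ℝ) * Real.log lam + Real.log ((A * ρ).trace.re) := by
  have hAρ : 1 ≤ (A * ρ).trace.re := by
    simpa [hρtr] using Matrix.trace_re_le_trace_mul_re (Matrix.le_iff.2 hAgeI) hρ
  have hSn := Matrix.posSemidef_pow_apply hpos n hρ
  have htrace : (A * (Λ ^ n) ρ).trace.re = lam ^ n * (A * ρ).trace.re := by
    rw [Matrix.trace_mul_pow_apply hAeig, ← Complex.ofReal_pow, Complex.re_ofReal_mul]
  have hlog : Real.log (lam ^ n * (A * ρ).trace.re) =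
      n * Real.log lam + Real.log ((A * ρ).trace.re) := by
    rw [Real.log_mul (by positivity) (by positivity), Real.log_pow]
  rw [← hlog]
  refine Real.log_sub_log_le_and_log_le (norm_nonneg A) (by positivity) ?_ ?_
  · rw [← htrace]; exact Matrix.trace_re_le_trace_mul_re (Matrix.le_iff.2 hAgeI) hSn
  · rw [← htrace]; exact Matrix.trace_mul_re_le_norm_mul_trace_re hA hSn

theorem cgf_finite_evaluation
    {d : ℕ} (Λ : Module.End ℂ (Matrix (Fin d) (Fin d) ℂ))
    (hpos : ∀ X : Matrix (Fin d) (Fin d) ℂ, X.PosSemidef → (Λ X).PosSemidef)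
    (lam : ℝ) (hlam : 0 < lam)
    (ρθ : Matrix (Fin d) (Fin d) ℂ) (hρθ : ρθ.PosDef) (hρθtr : ρθ.trace = 1)
    (hρθeig : Λ ρθ = (lam : ℂ) • ρθ)
    (A : Matrix (Fin d) (Fin d) ℂ) (hA : A.IsHermitian)
    -- A is an eigenvector of the adjoint map Λ* with eigenvalue lam:
    (hAeig : ∀ X : Matrix (Fin d) (Fin d) ℂ, (A * Λ X).trace = (lam : ℂ) * (A * X).trace)
    -- A ≥ I but A - I is not strictly positive definite:
    (hAgeI : (A - 1).PosSemidef) (hAnot : ¬ (A - 1).PosDef)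
    (ρ : Matrix (Fin d) (Fin d) ℂ) (hρ : ρ.PosSemidef) (hρtr : ρ.trace = 1)
    (n : ℕ) :
    (n : ℝ) * Real.log lam + Real.log ((A * ρ).trace.re) - Real.log ‖A‖
        ≤ Real.log (((Λ ^ n) ρ).trace.re) ∧
    Real.log (((Λ ^ n) ρ).trace.re)
        ≤ (n : ℝ) * Real.log lam + Real.log ((A * ρ).trace.re) :=
  cgf_finite_evaluation_general Λ hpos lam hlam A hA hAeig hAgeI ρ hρ hρtr n
end

section
/- Let Λ be a linear map on a finite-dimensional vector space with Λ̃∘Λ = Λ∘Λ̃ = Λ̃² = Λ̃ and Λⁿ → Λ̃, and Z := (id - (Λ - Λ̃))⁻¹. Then Z - id equals the limit as n → ∞ of (1/n)∑_{k=1}^n (n - k + 1)(Λᵏ - Λ̃) (Cesàro mean of the partial sums of ∑(Λᵏ - Λ̃)). -/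
theorem fundamental_matrix_cesaro
    {V : Type*} [NormedAddCommGroup V] [NormedSpace ℝ V] [FiniteDimensional ℝ V]
    (Λ Λt Z : V →L[ℝ] V)
    (h₁ : Λt * Λ = Λt) (h₂ : Λ * Λt = Λt) (h₃ : Λt * Λt = Λt)
    (hconv : Filter.Tendsto (fun n => Λ ^ n) Filter.atTop (nhds Λt))
    (hZ₁ : (1 - (Λ - Λt)) * Z = 1) (hZ₂ : Z * (1 - (Λ - Λt)) = 1) :
    Filter.Tendsto
      (fun n : ℕ => (1 / (n : ℝ)) •
        ∑ k ∈ Finset.Icc 1 n, (((n : ℝ) - (k : ℝ) + 1) • (Λ ^ k - Λt)))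
      Filter.atTop (nhds (Z - 1)) := by
  set A : V →L[ℝ] V := Λ - Λt with hAdef
  have hP : ∀ k : ℕ, Λ ^ k * Λt = Λt := by
    intro k
    induction k with
    | zero => simp
    | succ k ih => rw [pow_succ, mul_assoc, h₂, ih]
  have hA : ∀ k : ℕ, A ^ (k + 1) = Λ ^ (k + 1) - Λt := by
    intro k
    induction k with
    | zero => simp [hAdef]
    | succ k ih =>
      rw [pow_succ, ih, hAdef, sub_mul, mul_sub, mul_sub, ← pow_succ, hP, h₁, h₃]
      abel
  set S : ℕ → (V →L[ℝ] V) := fun m => ∑ k ∈ Finset.Icc 1 m, (Λ ^ k - Λt) with hS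
  have hSrange : ∀ m, S m = ∑ i ∈ Finset.range m, A ^ (i + 1) := by
    intro m
    induction m with
    | zero => simp [hS]
    | succ m ih =>
      simp only [hS] at ih ⊢
      rw [Finset.sum_Icc_succ_top (by omega : 1 ≤ m + 1), Finset.sum_range_succ, ih, hA m]
  have hZA : Z * A = Z - 1 := by
    have := hZ₂
    rw [mul_sub, mul_one] at this
    rw [← this]
    abel
  have hSval : ∀ m, S m = (Z - 1) - Z * A ^ (m + 1) := by
    intro m
    have key : (1 - A) * S m = A - A ^ (m + 1) := by
      rw [hSrange, Finset.mul_sum]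
      have : ∀ i ∈ Finset.range m, (1 - A) * A ^ (i + 1) = A ^ (i + 1) - A ^ (i + 1 + 1) := by
        intro i _
        rw [sub_mul, one_mul, ← pow_succ']
      rw [Finset.sum_congr rfl this, Finset.sum_range_sub' (fun i => A ^ (i + 1))]
      norm_num
    have : Z * ((1 - A) * S m) = Z * (A - A ^ (m + 1)) := by rw [key]
    rw [← mul_assoc] at this
    rw [hZ₂, one_mul] at this
    rw [this, mul_sub, hZA]
  have hA0 : Filter.Tendsto (fun m : ℕ => A ^ (m + 1)) Filter.atTop (nhds 0) := by
    have h1 : Filter.Tendsto (fun m : ℕ => Λ ^ (m + 1)) Filter.atTop (nhds Λt) :=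
      hconv.comp (Filter.tendsto_add_atTop_nat 1)
    have := h1.sub (tendsto_const_nhds (x := Λt))
    simp only [sub_self] at this
    convert this using 2 with m
    exact hA m
  have hSlim : Filter.Tendsto S Filter.atTop (nhds (Z - 1)) := by
    have h2 : Filter.Tendsto (fun m : ℕ => Z * A ^ (m + 1)) Filter.atTop (nhds 0) := by
      have := hA0.const_mul Z
      simpa using this
    have := (tendsto_const_nhds (x := Z - 1)).sub h2
    simp only [sub_zero] at this
    exact (Filter.tendsto_congr fun m => (hSval m)).mpr this
  have hces := (hSlim.comp (Filter.tendsto_add_atTop_nat 1)).cesaro_smul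
  have key2 : ∀ n : ℕ, (∑ k ∈ Finset.Icc 1 n, (((n : ℝ) - (k : ℝ) + 1) • (Λ ^ k - Λt)))
      = ∑ i ∈ Finset.range n, S (i + 1) := by
    intro n
    induction n with
    | zero => simp
    | succ n ih =>
      rw [Finset.sum_range_succ, ← ih, Finset.sum_Icc_succ_top (by omega : 1 ≤ n + 1)]
      have hc : ∀ k : ℕ, (((n + 1 : ℕ) : ℝ) - (k : ℝ) + 1) • (Λ ^ k - Λt)
          = ((n : ℝ) - (k : ℝ) + 1) • (Λ ^ k - Λt) + (Λ ^ k - Λt) := by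
        intro k
        rw [show (((n + 1 : ℕ) : ℝ) - (k : ℝ) + 1) = ((n : ℝ) - (k : ℝ) + 1) + 1 by
          push_cast; ring, add_smul, one_smul]
      rw [Finset.sum_congr rfl (fun k _ => hc k), Finset.sum_add_distrib]
      have hSn : S (n + 1) = (∑ k ∈ Finset.Icc 1 n, (Λ ^ k - Λt)) + (Λ ^ (n + 1) - Λt) := by
        rw [hS]
        exact Finset.sum_Icc_succ_top (by omega : 1 ≤ n + 1) _
      rw [hSn]
      have : (((n + 1 : ℕ) : ℝ) - ((n + 1 : ℕ) : ℝ) + 1) = 1 := by ring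
      rw [this, one_smul]
      abel
  refine (Filter.tendsto_congr fun n => ?_).mpr hces
  rw [key2, one_div]
  rfl
end

section
/- Let Λ be the linear map on d×d complex matrices (d ≥ 2) defined on an orthonormal basis {|i⟩}_{i∈ℤ/dℤ} by Λ(H) := ∑_{i} ⟨i-1|H|i-1⟩ |i⟩⟨i| (indices mod d). If ρ is a density matrix and α ≥ 0 satisfies Λ(ρ) ≤ α·ρ (in the positive-semidefinite order), then ρ is strictly positive definite. -/
/-!
If a diagonal entry `ρ i i` vanishes, the `(i, i)` entry of `α • ρ - Λ ρ ≥ 0` is `-ρ (i-1) (i-1)`,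
so `ρ (i-1) (i-1) = 0` as well; going around the cycle would give `Tr ρ = 0`. Hence `Λ ρ` is a
diagonal matrix with positive entries, and `α • ρ ≥ Λ ρ > 0` forces `ρ > 0`.
-/

open scoped ComplexOrder
open Matrix

namespace Matrix

variable {n 𝕜 : Type*} [RCLike 𝕜]

lemma PosDef.of_smul [Nonempty n] {A : Matrix n n 𝕜} {c : 𝕜} (hc : 0 ≤ c)
    (h : (c • A).PosDef) : A.PosDef := by
  have hc0 : c ≠ 0 := by
    rintro rfl
    simpa using h.diag_pos (i := Classical.arbitrary n)
  simpa [smul_smul, inv_mul_cancel₀ hc0] using h.smul (inv_pos.2 (hc.lt_of_ne' hc0))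

lemma PosSemidef.diag_eq_zero_of_smul_sub_diagonal [DecidableEq n] {A : Matrix n n 𝕜}
    (hA : A.PosSemidef) {c : 𝕜} {σ : n → n}
    (h : (c • A - diagonal fun i => A (σ i) (σ i)).PosSemidef) {i : n} (hi : A i i = 0) :
    A (σ i) (σ i) = 0 := by
  have hle : 0 ≤ c * A i i - A (σ i) (σ i) := by simpa using h.diag_nonneg (i := i)
  rw [hi, mul_zero, zero_sub, neg_nonneg] at hle
  exact le_antisymm hle hA.diag_nonneg

end Matrix

open Fin.NatCast in
theorem Fin.forall_of_imp_sub_one {d : ℕ} [NeZero d] {p : Fin d → Prop}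
    (h : ∀ i, p i → p (i - 1)) {j : Fin d} (hj : p j) (i : Fin d) : p i := by
  have hstep : ∀ k : ℕ, p (j - k) := by
    intro k
    induction k with
    | zero => simpa using hj
    | succ k ih => simpa [sub_sub] using h _ ih
  simpa using hstep (j - i).val

theorem cyclic_shift_irreducible_condition_general
    {d : ℕ} [NeZero d]
    (Λ : Matrix (Fin d) (Fin d) ℂ → Matrix (Fin d) (Fin d) ℂ)
    (hΛ : ∀ H, Λ H = Matrix.of fun i j =>
      if i = j then H (i - 1) (i - 1) else 0)
    (ρ : Matrix (Fin d) (Fin d) ℂ) (hρ : ρ.PosSemidef) (hρtr : ρ.trace = 1)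
    (α : ℝ) (hα : 0 ≤ α)
    (hle : ((α : ℂ) • ρ - Λ ρ).PosSemidef) :
    ρ.PosDef := by
  have hΛρ : Λ ρ = diagonal fun i => ρ (i - 1) (i - 1) := hΛ ρ
  rw [hΛρ] at hle
  have hdiag : ∀ i, ρ i i ≠ 0 := by
    intro i hi
    have hzero : ∀ j, ρ j j = 0 :=
      Fin.forall_of_imp_sub_one (fun _ => hρ.diag_eq_zero_of_smul_sub_diagonal hle) hi
    simp [trace, hzero] at hρtr
  have hΛpos : (diagonal fun i => ρ (i - 1) (i - 1)).PosDef :=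
    posDef_diagonal_iff.2 fun i => hρ.diag_nonneg.lt_of_ne' (hdiag _)
  refine PosDef.of_smul (c := (α : ℂ)) (by exact_mod_cast hα) ?_
  simpa using hΛpos.add_posSemidef hle

theorem cyclic_shift_irreducible_condition
    {d : ℕ} [NeZero d] (hd : 2 ≤ d)
    (Λ : Matrix (Fin d) (Fin d) ℂ → Matrix (Fin d) (Fin d) ℂ)
    (hΛ : ∀ H, Λ H = Matrix.of fun i j =>
      if i = j then H (i - 1) (i - 1) else 0)
    (ρ : Matrix (Fin d) (Fin d) ℂ) (hρ : ρ.PosSemidef) (hρtr : ρ.trace = 1)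
    (α : ℝ) (hα : 0 ≤ α)
    (hle : ((α : ℂ) • ρ - Λ ρ).PosSemidef) :
    ρ.PosDef :=
  cyclic_shift_irreducible_condition_general Λ hΛ ρ hρ hρtr α hα hle
end

section
/- With the setup of a stationary hidden quantum Markov process (instrument {C_ω}, Λ = ∑_ω C_ω trace-preserving, fixed state ρ, C_X := ∑_ω X(ω)C_ω), the variance of S_n := ∑_{i=1}^n X_i satisfies Var(S_n) = n·Var_ρ[X] + 2∑_{k=0}^{n-2}(n-k-1)·Tr C_X∘(Λᵏ - Λ̃)∘C_X(ρ), where Λ̃(H) := (Tr H)ρ and Var_ρ[X] := ∑_ω X(ω)² Tr C_ω(ρ) - (∑_ω X(ω) Tr C_ω(ρ))². -/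
/-!
Write `Λ = ∑ ω, C ω`, `C_g = ∑ ω, g ω • C ω`, and let `M_p(n) = ∑_x S(x)^p • C_{x_n} ⋯ C_{x_1} ρ`
(`pathMoment`), so that `Tr M_p(n) = E[S_n^p]`. Appending one more outcome gives
`M_1(n+1) = Λ M_1(n) + C_X ρ` and `M_2(n+1) = Λ M_2(n) + 2 C_X M_1(n) + C_{X²} ρ`, because
`M_0(n) = Λⁿ ρ = ρ`. Hence `M_1(n) = ∑_{k<n} Λᵏ C_X ρ`, and since `Tr ∘ Λ = Tr`,
`Var(S_{n+1}) - Var(S_n) = Var_ρ[X] + 2 ∑_{k<n} (Tr C_X Λᵏ C_X ρ - m²)` with `m = Tr C_X ρ`.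
Summing over `n` and exchanging the two sums produces the weights `n - k - 1`. Positivity enters
only to make `m` real, so that `(Re m)² = Re (m²)`.
-/

open scoped ComplexOrder

/-- Complete positivity via the Choi matrix criterion. -/
def IsCompletelyPositive {d : ℕ}
    (C : Matrix (Fin d) (Fin d) ℂ →ₗ[ℂ] Matrix (Fin d) (Fin d) ℂ) : Prop :=
  (Matrix.of fun p q : Fin d × Fin d =>
      (C (Matrix.single p.1 q.1 1)) p.2 q.2).PosSemidef

open Finset

theorem List.foldl_ofFn_snoc {α β : Type*} {n : ℕ} (f : β → α → β) (b : β) (x : Fin n → α)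
    (a : α) :
    (List.ofFn (Fin.snoc x a : Fin (n + 1) → α)).foldl f b = f ((List.ofFn x).foldl f b) a := by
  rw [List.ofFn_succ']
  simp

theorem Fin.sum_pi_succ_eq_sum_snoc {Ω M : Type*} [Fintype Ω] [AddCommMonoid M] {n : ℕ}
    (G : (Fin (n + 1) → Ω) → M) :
    ∑ x, G x = ∑ ω, ∑ y : Fin n → Ω, G (Fin.snoc y ω) := by
  rw [← (Fin.snocEquiv fun _ => Ω).sum_comp, Fintype.sum_prod_type]
  rfl

theorem Finset.sum_range_sum_range_eq_sum_mul {R : Type*} [CommRing R] (f : ℕ → R) (n : ℕ) :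
    ∑ j ∈ range n, ∑ k ∈ range j, f k = ∑ k ∈ range (n - 1), ((n : R) - k - 1) * f k := by
  have hfull : ∀ n, ∑ j ∈ range n, ∑ k ∈ range j, f k
      = ∑ k ∈ range n, ((n : R) - k - 1) * f k := by
    intro n
    induction n with
    | zero => simp
    | succ n ih =>
      rw [sum_range_succ, ih, sum_range_succ _ n, ← sum_add_distrib]
      push_cast
      ring_nf
  rw [hfull]
  cases n with
  | zero => simp
  | succ n => simp [sum_range_succ]

section PathMoments

variable {R V Ω : Type*} [CommRing R] [AddCommGroup V] [Module R V] [Fintype Ω]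
variable (C : Ω → V →ₗ[R] V) (X : Ω → R)

def pathMoment (p n : ℕ) (σ : V) : V :=
  ∑ x : Fin n → Ω, (∑ i, X (x i)) ^ p • (List.ofFn x).foldl (fun σ ω => C ω σ) σ

theorem sum_smul_foldl_ofFn_succ (φ : R → R) (n : ℕ) (σ : V) :
    ∑ x : Fin (n + 1) → Ω, φ (∑ i, X (x i)) • (List.ofFn x).foldl (fun σ ω => C ω σ) σ
      = ∑ ω, C ω (∑ y : Fin n → Ω,
          φ (X ω + ∑ i, X (y i)) • (List.ofFn y).foldl (fun σ ω => C ω σ) σ) := by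
  simp only [Fin.sum_pi_succ_eq_sum_snoc, List.foldl_ofFn_snoc, Fin.sum_univ_castSucc,
    Fin.snoc_castSucc, Fin.snoc_last, add_comm _ (X _), map_sum, map_smul]

theorem pathMoment_zero (n : ℕ) (σ : V) : pathMoment C X 0 n σ = ((∑ ω, C ω) ^ n) σ := by
  induction n with
  | zero => simp [pathMoment]
  | succ n ih =>
    rw [pathMoment, sum_smul_foldl_ofFn_succ C X (· ^ 0)]
    simp only [pathMoment, pow_zero, one_smul] at ih ⊢
    simp only [ih, pow_succ', Module.End.mul_apply, LinearMap.sum_apply]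

theorem pathMoment_one_succ (n : ℕ) (σ : V) :
    pathMoment C X 1 (n + 1) σ
      = (∑ ω, C ω) (pathMoment C X 1 n σ) + (∑ ω, X ω • C ω) (pathMoment C X 0 n σ) := by
  rw [pathMoment, sum_smul_foldl_ofFn_succ C X (· ^ 1)]
  simp only [pathMoment, pow_one, pow_zero, one_smul, add_smul, sum_add_distrib, map_add,
    ← smul_sum, map_smul, LinearMap.sum_apply, LinearMap.smul_apply, add_comm]

theorem pathMoment_two_succ (n : ℕ) (σ : V) :
    pathMoment C X 2 (n + 1) σ
      = (∑ ω, C ω) (pathMoment C X 2 n σ) + (2 : R) • (∑ ω, X ω • C ω) (pathMoment C X 1 n σ)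
        + (∑ ω, X ω ^ 2 • C ω) (pathMoment C X 0 n σ) := by
  rw [pathMoment, sum_smul_foldl_ofFn_succ C X (· ^ 2)]
  simp only [add_sq, pathMoment, pow_one, pow_zero, one_smul, add_smul, mul_smul,
    sum_add_distrib, map_add, ← smul_sum, map_smul, LinearMap.sum_apply, LinearMap.smul_apply]
  abel

variable {σ : V} (hσ : (∑ ω, C ω) σ = σ)
include hσ

theorem pathMoment_zero_of_fixed (n : ℕ) : pathMoment C X 0 n σ = σ := by
  rw [pathMoment_zero, Module.End.coe_pow]
  exact Function.IsFixedPt.iterate hσ n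

theorem pathMoment_one_of_fixed (n : ℕ) :
    pathMoment C X 1 n σ = ∑ k ∈ range n, ((∑ ω, C ω) ^ k) ((∑ ω, X ω • C ω) σ) := by
  induction n with
  | zero => simp [pathMoment]
  | succ n ih =>
    rw [pathMoment_one_succ, ih, pathMoment_zero_of_fixed C X hσ, sum_range_succ', map_sum]
    simp only [pow_succ', Module.End.mul_apply, pow_zero, Module.End.one_apply]

omit hσ

variable {C} {τ : V →ₗ[R] R} (hτ : ∀ v, τ ((∑ ω, C ω) v) = τ v)
include hτ

theorem map_pow_apply_of_invariant (k : ℕ) (v : V) : τ (((∑ ω, C ω) ^ k) v) = τ v := by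
  induction k with
  | zero => rfl
  | succ k ih => rw [pow_succ', Module.End.mul_apply, hτ, ih]

include hσ

theorem map_pathMoment_one (n : ℕ) :
    τ (pathMoment C X 1 n σ) = n * τ ((∑ ω, X ω • C ω) σ) := by
  simp [pathMoment_one_of_fixed C X hσ, map_sum, map_pow_apply_of_invariant hτ]

theorem map_pathMoment_two_sub_sq (n : ℕ) :
    τ (pathMoment C X 2 n σ) - τ (pathMoment C X 1 n σ) ^ 2
      = n * (τ ((∑ ω, X ω ^ 2 • C ω) σ) - τ ((∑ ω, X ω • C ω) σ) ^ 2)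
        + 2 * ∑ j ∈ range n, ∑ k ∈ range j,
          (τ ((∑ ω, X ω • C ω) (((∑ ω, C ω) ^ k) ((∑ ω, X ω • C ω) σ)))
            - τ ((∑ ω, X ω • C ω) σ) ^ 2) := by
  induction n with
  | zero => simp [pathMoment]
  | succ n ih =>
    rw [map_pathMoment_one X hσ hτ] at ih ⊢
    rw [pathMoment_two_succ, map_add, map_add, hτ, map_smul, pathMoment_one_of_fixed C X hσ,
      pathMoment_zero_of_fixed C X hσ, sum_range_succ, sum_sub_distrib, map_sum, map_sum]
    simp only [sum_const, card_range, nsmul_eq_mul, smul_eq_mul, Nat.cast_add, Nat.cast_one]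
    linear_combination ih

theorem map_pathMoment_two_sub_sq_eq_sum (n : ℕ) :
    τ (pathMoment C X 2 n σ) - τ (pathMoment C X 1 n σ) ^ 2
      = n * (τ ((∑ ω, X ω ^ 2 • C ω) σ) - τ ((∑ ω, X ω • C ω) σ) ^ 2)
        + 2 * ∑ k ∈ range (n - 1), ((n : R) - k - 1) *
          (τ ((∑ ω, X ω • C ω) (((∑ ω, C ω) ^ k) ((∑ ω, X ω • C ω) σ)))
            - τ ((∑ ω, X ω • C ω) σ) ^ 2) := by
  rw [map_pathMoment_two_sub_sq X hσ hτ, sum_range_sum_range_eq_sum_mul]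

end PathMoments

section Choi

variable {ι : Type*} [Fintype ι] [DecidableEq ι]

def choiMatrix (A : Matrix ι ι ℂ →ₗ[ℂ] Matrix ι ι ℂ) : Matrix (ι × ι) (ι × ι) ℂ :=
  Matrix.of fun p q => A (Matrix.single p.1 q.1 1) p.2 q.2

theorem trace_apply_eq_sum_choiMatrix (A : Matrix ι ι ℂ →ₗ[ℂ] Matrix ι ι ℂ) (ρ : Matrix ι ι ℂ) :
    (A ρ).trace = ∑ k, ∑ l, ρ k l * ∑ i, choiMatrix A (k, i) (l, i) := by
  conv_lhs => rw [ρ.matrix_eq_sum_single]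
  simp only [map_sum, Matrix.trace_sum]
  refine sum_congr rfl fun k _ => sum_congr rfl fun l _ => ?_
  rw [show Matrix.single k l (ρ k l) = ρ k l • Matrix.single k l 1 by
    rw [Matrix.smul_single, smul_eq_mul, mul_one]]
  rw [map_smul, Matrix.trace_smul, smul_eq_mul]
  rfl

theorem im_trace_apply_eq_zero {A : Matrix ι ι ℂ →ₗ[ℂ] Matrix ι ι ℂ}
    (hA : (choiMatrix A).IsHermitian) {ρ : Matrix ι ι ℂ} (hρ : ρ.IsHermitian) :
    (A ρ).trace.im = 0 := by
  rw [← Complex.conj_eq_iff_im, trace_apply_eq_sum_choiMatrix]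
  conv_rhs => rw [sum_comm]
  simp only [map_sum, map_mul]
  refine sum_congr rfl fun k _ => sum_congr rfl fun l _ => ?_
  congr 1
  · exact hρ.apply l k
  · exact sum_congr rfl fun i _ => hA.apply (l, i) (k, i)

end Choi

theorem re_trace_pathMoment_ofReal {ι Ω : Type*} [Fintype ι] [Fintype Ω]
    (C : Ω → Matrix ι ι ℂ →ₗ[ℂ] Matrix ι ι ℂ) (X : Ω → ℝ) (p n : ℕ) (ρ : Matrix ι ι ℂ) :
    (pathMoment C (fun ω => (X ω : ℂ)) p n ρ).trace.re
      = ∑ x : Fin n → Ω,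
          (∑ i, X (x i)) ^ p * ((List.ofFn x).foldl (fun σ ω => C ω σ) ρ).trace.re := by
  simp [pathMoment, Complex.re_sum, ← Complex.ofReal_sum, ← Complex.ofReal_pow]

theorem variance_formula_hidden_quantum_markov_general
    {d : ℕ} {Ω : Type*} [Fintype Ω]
    (C : Ω → (Matrix (Fin d) (Fin d) ℂ →ₗ[ℂ] Matrix (Fin d) (Fin d) ℂ))
    (hCP : ∀ ω, IsCompletelyPositive (C ω))
    (hTP : ∀ H : Matrix (Fin d) (Fin d) ℂ, ((∑ ω, C ω) H).trace = H.trace)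
    (ρ : Matrix (Fin d) (Fin d) ℂ) (hρ : ρ.PosSemidef)
    (hfix : (∑ ω, C ω) ρ = ρ)
    (X : Ω → ℝ)
    (CX : Matrix (Fin d) (Fin d) ℂ →ₗ[ℂ] Matrix (Fin d) (Fin d) ℂ)
    (hCX : CX = ∑ ω, (X ω : ℂ) • C ω)
    (Λt : Matrix (Fin d) (Fin d) ℂ →ₗ[ℂ] Matrix (Fin d) (Fin d) ℂ)
    (hΛt : ∀ H, Λt H = H.trace • ρ)
    (n : ℕ) :
    letI prob : (Fin n → Ω) → ℝ :=
      fun x => (((List.ofFn x).foldl (fun σ ω => C ω σ) ρ).trace).re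
    letI S : (Fin n → Ω) → ℝ := fun x => ∑ i, X (x i)
    letI Var : ℝ := ∑ ω, X ω ^ 2 * ((C ω ρ).trace).re
      - (∑ ω, X ω * ((C ω ρ).trace).re) ^ 2
    (∑ x : Fin n → Ω, (S x) ^ 2 * prob x)
        - (∑ x : Fin n → Ω, S x * prob x) ^ 2
      = (n : ℝ) * Var
        + 2 * ∑ k ∈ Finset.range (n - 1), ((n : ℝ) - (k : ℝ) - 1) *
            ((CX (((∑ ω, C ω) ^ k - Λt) (CX ρ))).trace).re := by
  have key := map_pathMoment_two_sub_sq_eq_sum (τ := Matrix.traceLinearMap (Fin d) ℂ ℂ)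
    (fun ω => (X ω : ℂ)) hfix hTP n
  have hM1 := map_pathMoment_one (τ := Matrix.traceLinearMap (Fin d) ℂ ℂ)
    (fun ω => (X ω : ℂ)) hfix hTP n
  simp only [Matrix.traceLinearMap_apply, ← hCX] at key hM1
  have hm_real : (CX ρ).trace.im = 0 := by
    simp [hCX, Complex.im_sum, im_trace_apply_eq_zero (hCP _).isHermitian hρ.isHermitian]
  have hmean : ∑ ω, X ω * (C ω ρ).trace.re = (CX ρ).trace.re := by
    simp [hCX, Complex.re_sum]
  have hcorr (k : ℕ) : (CX (((∑ ω, C ω) ^ k - Λt) (CX ρ))).trace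
      = (CX (((∑ ω, C ω) ^ k) (CX ρ))).trace - (CX ρ).trace ^ 2 := by
    simp [hΛt, sq]
  have hS1 := re_trace_pathMoment_ofReal C X 1 n ρ
  simp only [pow_one] at hS1
  simp only [← hS1, ← re_trace_pathMoment_ofReal, hmean, hcorr, hM1]
  simpa [Complex.re_sum, hm_real, sq, hM1] using congrArg Complex.re key

theorem variance_formula_hidden_quantum_markov
    {d : ℕ} {Ω : Type*} [Fintype Ω] [DecidableEq Ω]
    (C : Ω → (Matrix (Fin d) (Fin d) ℂ →ₗ[ℂ] Matrix (Fin d) (Fin d) ℂ))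
    (hCP : ∀ ω, IsCompletelyPositive (C ω))
    (hTP : ∀ H : Matrix (Fin d) (Fin d) ℂ, ((∑ ω, C ω) H).trace = H.trace)
    (ρ : Matrix (Fin d) (Fin d) ℂ) (hρ : ρ.PosSemidef) (hρtr : ρ.trace = 1)
    (hfix : (∑ ω, C ω) ρ = ρ)
    (X : Ω → ℝ)
    (CX : Matrix (Fin d) (Fin d) ℂ →ₗ[ℂ] Matrix (Fin d) (Fin d) ℂ)
    (hCX : CX = ∑ ω, (X ω : ℂ) • C ω)
    (Λt : Matrix (Fin d) (Fin d) ℂ →ₗ[ℂ] Matrix (Fin d) (Fin d) ℂ)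
    (hΛt : ∀ H, Λt H = H.trace • ρ)
    (n : ℕ) :
    letI prob : (Fin n → Ω) → ℝ :=
      fun x => (((List.ofFn x).foldl (fun σ ω => C ω σ) ρ).trace).re
    letI S : (Fin n → Ω) → ℝ := fun x => ∑ i, X (x i)
    letI Var : ℝ := ∑ ω, X ω ^ 2 * ((C ω ρ).trace).re
      - (∑ ω, X ω * ((C ω ρ).trace).re) ^ 2
    (∑ x : Fin n → Ω, (S x) ^ 2 * prob x)
        - (∑ x : Fin n → Ω, S x * prob x) ^ 2
      = (n : ℝ) * Var
        + 2 * ∑ k ∈ Finset.range (n - 1), ((n : ℝ) - (k : ℝ) - 1) *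
            ((CX (((∑ ω, C ω) ^ k - Λt) (CX ρ))).trace).re :=
  variance_formula_hidden_quantum_markov_general C hCP hTP ρ hρ hfix X CX hCX Λt hΛt n
end

section
/- Let μ_n, μ be probability measures on ℝ whose moment generating functions M_n(θ) := ∫e^{θx}dμ_n(x) and M(θ) := ∫e^{θx}dμ(x) are finite for all real θ, and suppose M_n(θ) → M(θ) for every θ ∈ ℝ. Then for every natural number k, the k-th moments converge: ∫x^k dμ_n(x) → ∫x^k dμ(x). -/
/-!
The power `((exp (h x) - 1) / h) ^ k` of the difference quotient is a finite linear combination of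
the exponentials `exp (j h x)`, so for each fixed `h` its integral against `μn n` converges to its
integral against `μ`. It differs from `x ^ k` by at most `h k (exp ((2k+3) x) + exp (-(2k+3) x))`,
and the integrals of this bound against `μn n` stay bounded because the MGFs converge at
`±(2k+3)`. Hence the approximation of the `k`-th moment as `h → 0⁺` is uniform in `n`, and the two
limits can be interchanged.
-/

open MeasureTheory Filter Finset Real Topology

lemma Real.abs_exp_sub_sum_le (x : ℝ) (n : ℕ) :
    |exp x - ∑ m ∈ range n, x ^ m / m.factorial| ≤ |x| ^ n * exp |x| := by
  rw [← Real.norm_eq_abs]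
  exact_mod_cast Complex.norm_exp_sub_sum_le_norm_mul_exp x n

section DifferenceQuotient

variable {h : ℝ}

lemma abs_exp_mul_sub_one_div_le (h0 : 0 < h) (h1 : h ≤ 1) (x : ℝ) :
    |(exp (h * x) - 1) / h| ≤ exp (2 * |x|) := by
  have hhx : |h * x| = h * |x| := by rw [abs_mul, abs_of_pos h0]
  have hhx_le : h * |x| ≤ |x| := mul_le_of_le_one_left (abs_nonneg x) h1
  have hx : |x| ≤ exp |x| := by linarith [add_one_le_exp |x|]
  rw [abs_div, abs_of_pos h0, div_le_iff₀ h0]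
  calc |exp (h * x) - 1| ≤ |h * x| * exp |h * x| := by
        simpa using Real.abs_exp_sub_sum_le (h * x) 1
    _ ≤ h * |x| * exp |x| := by rw [hhx]; gcongr
    _ ≤ h * exp |x| * exp |x| := by gcongr
    _ = exp (2 * |x|) * h := by rw [mul_assoc, ← exp_add, two_mul, mul_comm]

lemma abs_exp_mul_sub_one_div_sub_le (h0 : 0 < h) (h1 : h ≤ 1) (x : ℝ) :
    |(exp (h * x) - 1) / h - x| ≤ h * exp (3 * |x|) := by
  have hhx : |h * x| = h * |x| := by rw [abs_mul, abs_of_pos h0]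
  have hhx_le : h * |x| ≤ |x| := mul_le_of_le_one_left (abs_nonneg x) h1
  have hx2 : |x| ^ 2 ≤ exp (2 * |x|) := calc
    |x| ^ 2 ≤ exp |x| ^ 2 := by gcongr; linarith [add_one_le_exp |x|]
    _ = exp (2 * |x|) := by rw [← exp_nat_mul]; norm_num
  rw [show (exp (h * x) - 1) / h - x = (exp (h * x) - 1 - h * x) / h by field_simp, abs_div,
    abs_of_pos h0, div_le_iff₀ h0]
  calc |exp (h * x) - 1 - h * x| ≤ |h * x| ^ 2 * exp |h * x| := by
        simpa [sum_range_succ, ← sub_sub] using Real.abs_exp_sub_sum_le (h * x) 2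
    _ ≤ h ^ 2 * |x| ^ 2 * exp |x| := by rw [hhx, mul_pow]; gcongr
    _ ≤ h ^ 2 * exp (2 * |x|) * exp |x| := by gcongr
    _ = h * exp (3 * |x|) * h := by rw [mul_assoc, ← exp_add]; ring_nf

lemma abs_pow_exp_mul_sub_one_div_sub_pow_le (h0 : 0 < h) (h1 : h ≤ 1) (k : ℕ) (x : ℝ) :
    |((exp (h * x) - 1) / h) ^ k - x ^ k| ≤
      h * k * (exp ((2 * k + 3) * x) + exp (-(2 * k + 3) * x)) := by
  set a := (exp (h * x) - 1) / h
  have hmax : max |a| |x| ≤ exp (2 * |x|) := by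
    refine max_le (abs_exp_mul_sub_one_div_le h0 h1 x) ?_
    have : exp |x| ≤ exp (2 * |x|) := exp_le_exp.2 (by linarith [abs_nonneg x])
    linarith [add_one_le_exp |x|]
  have hθ : (2 * k + 3 : ℝ) * |x| = |(2 * k + 3) * x| := by
    rw [abs_mul, abs_of_pos (by positivity : (0 : ℝ) < 2 * k + 3)]
  calc |a ^ k - x ^ k| ≤ |a - x| * k * max |a| |x| ^ (k - 1) := abs_pow_sub_pow_le ..
    _ ≤ h * exp (3 * |x|) * k * exp (2 * |x|) ^ k := by
      gcongr
      · exact abs_exp_mul_sub_one_div_sub_le h0 h1 x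
      · exact (pow_le_pow_left₀ (by positivity) hmax _).trans
          (pow_le_pow_right₀ (one_le_exp (by positivity)) (Nat.sub_le k 1))
    _ = h * k * exp ((2 * k + 3) * |x|) := by
      rw [← exp_nat_mul, show (2 * k + 3 : ℝ) * |x| = 3 * |x| + k * (2 * |x|) by ring, exp_add]
      ring
    _ ≤ h * k * (exp ((2 * k + 3) * x) + exp (-(2 * k + 3) * x)) := by
      rw [hθ, neg_mul]; gcongr; exact exp_abs_le _

end DifferenceQuotient

lemma pow_exp_mul_sub_one_div_eq_sum (k : ℕ) (h x : ℝ) :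
    ((exp (h * x) - 1) / h) ^ k =
      ∑ j ∈ range (k + 1), (-1) ^ (j + k) * k.choose j / h ^ k * exp (j * h * x) := by
  rw [div_pow, sub_pow, sum_div]
  refine sum_congr rfl fun j _ => ?_
  rw [← exp_nat_mul, one_pow]
  ring_nf

section ExponentialMoments

variable {ν : Measure ℝ}

lemma integrable_pow_exp_mul_sub_one_div (hν : ∀ θ, Integrable (fun x => exp (θ * x)) ν)
    (k : ℕ) (h : ℝ) :
    Integrable (fun x => ((exp (h * x) - 1) / h) ^ k) ν := by
  simp_rw [pow_exp_mul_sub_one_div_eq_sum]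
  exact integrable_finsetSum _ fun j _ => (hν _).const_mul _

lemma integral_pow_exp_mul_sub_one_div (hν : ∀ θ, Integrable (fun x => exp (θ * x)) ν)
    (k : ℕ) (h : ℝ) :
    ∫ x, ((exp (h * x) - 1) / h) ^ k ∂ν =
      ∑ j ∈ range (k + 1), (-1) ^ (j + k) * k.choose j / h ^ k * ∫ x, exp (j * h * x) ∂ν := by
  simp_rw [pow_exp_mul_sub_one_div_eq_sum, ← integral_const_mul]
  exact integral_finsetSum _ fun j _ => (hν _).const_mul _

lemma abs_integral_pow_exp_mul_sub_one_div_sub_integral_pow_le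
    (hν : ∀ θ, Integrable (fun x => exp (θ * x)) ν) {h : ℝ} (h0 : 0 < h) (h1 : h ≤ 1) (k : ℕ) :
    |∫ x, ((exp (h * x) - 1) / h) ^ k ∂ν - ∫ x, x ^ k ∂ν| ≤
      h * k * (∫ x, exp ((2 * k + 3) * x) ∂ν + ∫ x, exp (-(2 * k + 3) * x) ∂ν) := by
  have hpow : Integrable (fun x : ℝ => x ^ k) ν :=
    ProbabilityTheory.integrable_pow_of_integrable_exp_mul (X := id) one_ne_zero (hν 1) (hν (-1)) k
  have hquot := integrable_pow_exp_mul_sub_one_div hν k h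
  rw [← integral_sub hquot hpow, ← integral_add (hν _) (hν _), ← integral_const_mul]
  exact abs_integral_le_integral_abs.trans (integral_mono (hquot.sub hpow).abs
    (((hν _).add (hν _)).const_mul _) (abs_pow_exp_mul_sub_one_div_sub_pow_le h0 h1 k))

end ExponentialMoments

section ApproximationAtZero

variable {α : Type*} [PseudoMetricSpace α]

theorem tendstoUniformlyOnFilter_of_dist_le_mul {ι : Type*} {F : ℝ → ι → α} {f : ι → α}
    {p : Filter ι} {C : ι → ℝ} {B : ℝ} (hC : ∀ᶠ n in p, C n ≤ B)
    (hF : ∀ᶠ h in 𝓝[>] 0, ∀ n, dist (f n) (F h n) ≤ h * C n) :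
    TendstoUniformlyOnFilter F f (𝓝[>] 0) p := by
  rw [Metric.tendstoUniformlyOnFilter_iff]
  intro ε hε
  have hsmall : ∀ᶠ h in 𝓝[>] (0 : ℝ), h * B < ε :=
    (((continuous_mul_const B).tendsto' 0 0 (zero_mul B)).mono_left
      nhdsWithin_le_nhds).eventually (gt_mem_nhds hε)
  filter_upwards [(hsmall.and (hF.and self_mem_nhdsWithin)).prod_mk hC]
    with ⟨h, n⟩ ⟨⟨hhB, hhF, hpos⟩, hnB⟩
  calc dist (f n) (F h n) ≤ h * C n := hhF n
    _ ≤ h * B := mul_le_mul_of_nonneg_left hnB (le_of_lt hpos)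
    _ < ε := hhB

theorem tendsto_nhdsGT_zero_of_dist_le_mul {g : ℝ → α} {a : α} {c : ℝ}
    (hg : ∀ᶠ h in 𝓝[>] 0, dist a (g h) ≤ h * c) :
    Tendsto g (𝓝[>] 0) (𝓝 a) := by
  simp_rw [dist_comm a] at hg
  refine tendsto_iff_dist_tendsto_zero.2
    (squeeze_zero' (Eventually.of_forall fun _ => dist_nonneg) hg ?_)
  exact ((continuous_mul_const c).tendsto' 0 0 (zero_mul c)).mono_left nhdsWithin_le_nhds

end ApproximationAtZero

theorem moments_converge_of_mgf_converges_general
    (μn : ℕ → Measure ℝ) (μ : Measure ℝ)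
    (hint_n : ∀ θ : ℝ, ∀ n, Integrable (fun x => Real.exp (θ * x)) (μn n))
    (hint : ∀ θ : ℝ, Integrable (fun x => Real.exp (θ * x)) μ)
    (hmgf : ∀ θ : ℝ,
      Tendsto (fun n => ∫ x, Real.exp (θ * x) ∂(μn n)) atTop
        (nhds (∫ x, Real.exp (θ * x) ∂μ)))
    (k : ℕ) :
    Tendsto (fun n => ∫ x, x ^ k ∂(μn n)) atTop (nhds (∫ x, x ^ k ∂μ)) := by
  set M : Measure ℝ → ℝ := fun ν =>
    ∫ x, exp ((2 * k + 3) * x) ∂ν + ∫ x, exp (-(2 * k + 3) * x) ∂ν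
  have hM : Tendsto (fun n => k * M (μn n)) atTop (𝓝 (k * M μ)) :=
    ((hmgf _).add (hmgf _)).const_mul _
  have hquot (h : ℝ) : Tendsto (fun n => ∫ x, ((exp (h * x) - 1) / h) ^ k ∂(μn n)) atTop
      (𝓝 (∫ x, ((exp (h * x) - 1) / h) ^ k ∂μ)) := by
    simp_rw [integral_pow_exp_mul_sub_one_div (hint_n · _), integral_pow_exp_mul_sub_one_div hint]
    exact tendsto_finsetSum _ fun j _ => (hmgf _).const_mul _
  have hclose {ν : Measure ℝ} (hν : ∀ θ, Integrable (fun x => exp (θ * x)) ν) {h : ℝ}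
      (hh : h ∈ Set.Ioc 0 1) :
      dist (∫ x, x ^ k ∂ν) (∫ x, ((exp (h * x) - 1) / h) ^ k ∂ν) ≤ h * (k * M ν) := by
    rw [dist_comm, Real.dist_eq, ← mul_assoc]
    exact abs_integral_pow_exp_mul_sub_one_div_sub_integral_pow_le hν hh.1 hh.2 k
  have hIoc : Set.Ioc (0 : ℝ) 1 ∈ 𝓝[>] 0 := Ioc_mem_nhdsGT one_pos
  refine (tendstoUniformlyOnFilter_of_dist_le_mul (hM.eventually_le_const (lt_add_one _))
    ?_).tendsto_of_eventually_tendsto (Eventually.of_forall hquot)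
    (tendsto_nhdsGT_zero_of_dist_le_mul (c := k * M μ) ?_)
  · filter_upwards [hIoc] with h hh n using hclose (hint_n · n) hh
  · filter_upwards [hIoc] with h hh using hclose hint hh

theorem moments_converge_of_mgf_converges
    (μn : ℕ → Measure ℝ) (μ : Measure ℝ)
    [∀ n, IsProbabilityMeasure (μn n)] [IsProbabilityMeasure μ]
    (hint_n : ∀ θ : ℝ, ∀ n, Integrable (fun x => Real.exp (θ * x)) (μn n))
    (hint : ∀ θ : ℝ, Integrable (fun x => Real.exp (θ * x)) μ)
    (hmgf : ∀ θ : ℝ,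
      Tendsto (fun n => ∫ x, Real.exp (θ * x) ∂(μn n)) atTop
        (nhds (∫ x, Real.exp (θ * x) ∂μ)))
    (k : ℕ) :
    Tendsto (fun n => ∫ x, x ^ k ∂(μn n)) atTop (nhds (∫ x, x ^ k ∂μ)) :=
  moments_converge_of_mgf_converges_general μn μ hint_n hint hmgf k
end

section
/- Let φ: ℝ → ℝ be twice differentiable at 0, and let (φ_n) be functions satisfying n·φ(θ) + u(θ) ≤ φ_n(θ) ≤ n·φ(θ) + v(θ) for all θ and n, where u, v: ℝ → ℝ are functions with u(θ) → 0 and v(θ) → 0 as θ → 0. Then for every δ ∈ ℝ, lim_{n→∞} [φ_n(δ/√n) - δ√n·φ'(0)] = (δ²/2)·φ''(0), provided φ(0) = 0. -/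
/-!
Let `g t = φ t - t φ'(0) - t² φ''(0) / 2`. Peano's form of Taylor's theorem gives `g t = o(t²)`, and
since `n (δ / √n)² = δ²`, this makes `n g(δ / √n) → 0`. As `φ 0 = 0`, the quantity
`n φ(δ / √n) - δ √n φ'(0)` equals `n g(δ / √n) + δ² φ''(0) / 2`, so it tends to `δ² φ''(0) / 2`; the
sandwich bounds then differ from it by `u(δ / √n)` and `v(δ / √n)`, both tending to `0`.
-/

open Filter Asymptotics Topology

theorem isLittleO_sub_taylor_two {E : Type*} [NormedAddCommGroup E] [NormedSpace ℝ E]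
    {f : ℝ → E} {x₀ : ℝ} (hf : Differentiable ℝ f) (hf' : DifferentiableAt ℝ (deriv f) x₀) :
    (fun x => f x - f x₀ - (x - x₀) • deriv f x₀ - ((x - x₀) ^ 2 / 2) • deriv (deriv f) x₀)
      =o[𝓝 x₀] fun x => (x - x₀) ^ 2 := by
  have hderiv : ∀ x ∈ Set.univ, HasDerivWithinAt
      (fun x => f x - (x - x₀) • deriv f x₀ - ((x - x₀) ^ 2 / 2) • deriv (deriv f) x₀)
      (deriv f x - deriv f x₀ - (x - x₀) • deriv (deriv f) x₀) Set.univ x := by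
    intro x _
    have hsq : HasDerivAt (fun x : ℝ => (x - x₀) ^ 2 / 2) (x - x₀) x := by
      simpa using (((hasDerivAt_id x).sub_const x₀).pow 2).div_const 2
    exact ((hf x).hasDerivAt.sub (((hasDerivAt_id x).sub_const x₀).smul_const _)
      |>.sub (hsq.smul_const _)).hasDerivWithinAt.congr_deriv (by simp)
  -- The remainder's derivative is `o(x - x₀)` since `deriv f` is differentiable at `x₀`;
  -- the mean value inequality integrates this to `o((x - x₀)²)`.
  have h := Convex.isLittleO_pow_succ_real convex_univ (Set.mem_univ x₀) hderiv
    (n := 1) (by simpa using hf'.hasDerivAt.isLittleO)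
  simp only [nhdsWithin_univ] at h
  refine h.congr (fun x => ?_) (fun x => rfl)
  simp only [sub_self, zero_smul, zero_pow two_ne_zero, zero_div, sub_zero]
  abel

theorem tendsto_div_sqrt_natCast_atTop (δ : ℝ) :
    Tendsto (fun n : ℕ => δ / √n) atTop (𝓝 0) :=
  tendsto_const_nhds.div_atTop (Real.tendsto_sqrt_atTop.comp tendsto_natCast_atTop_atTop)

theorem natCast_mul_div_sqrt_sq {n : ℕ} (hn : n ≠ 0) (δ : ℝ) : (n : ℝ) * (δ / √n) ^ 2 = δ ^ 2 := by
  have : (0 : ℝ) < n := by positivity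
  rw [div_pow, Real.sq_sqrt this.le]
  field_simp

theorem natCast_mul_div_sqrt {n : ℕ} (hn : n ≠ 0) (δ : ℝ) : (n : ℝ) * (δ / √n) = δ * √n := by
  have : (0 : ℝ) < √n := by positivity
  calc (n : ℝ) * (δ / √n) = (√n * √n) * (δ / √n) := by rw [Real.mul_self_sqrt n.cast_nonneg]
    _ = δ * √n := by field_simp

theorem tendsto_natCast_mul_div_sqrt_of_isLittleO_sq {g : ℝ → ℝ}
    (hg : g =o[𝓝 0] fun t => t ^ 2) (δ : ℝ) :
    Tendsto (fun n : ℕ => n * g (δ / √n)) atTop (𝓝 0) := by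
  have h : (fun n : ℕ => n * g (δ / √n)) =o[atTop] fun n : ℕ => (n : ℝ) * (δ / √n) ^ 2 :=
    (isBigO_refl _ _).mul_isLittleO (hg.comp_tendsto (tendsto_div_sqrt_natCast_atTop δ))
  have hconst : (fun n : ℕ => (n : ℝ) * (δ / √n) ^ 2) =ᶠ[atTop] fun _ => δ ^ 2 := by
    filter_upwards [eventually_ne_atTop 0] with n hn using natCast_mul_div_sqrt_sq hn δ
  rw [← isLittleO_one_iff ℝ]
  exact (h.congr' EventuallyEq.rfl hconst).trans_isBigO (isBigO_const_one ℝ _ _)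

theorem tendsto_natCast_mul_div_sqrt_sub {φ : ℝ → ℝ} (hφ0 : φ 0 = 0) (hφ : Differentiable ℝ φ)
    (hφ' : DifferentiableAt ℝ (deriv φ) 0) (δ : ℝ) :
    Tendsto (fun n : ℕ => n * φ (δ / √n) - δ * √n * deriv φ 0) atTop
      (𝓝 (δ ^ 2 / 2 * deriv (deriv φ) 0)) := by
  set g : ℝ → ℝ := fun t => φ t - t * deriv φ 0 - t ^ 2 / 2 * deriv (deriv φ) 0
  have hg : g =o[𝓝 0] fun t => t ^ 2 := by
    simpa [hφ0] using isLittleO_sub_taylor_two hφ hφ'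
  have h := (tendsto_natCast_mul_div_sqrt_of_isLittleO_sq hg δ).add_const
    (δ ^ 2 / 2 * deriv (deriv φ) 0)
  rw [zero_add] at h
  refine h.congr' ?_
  filter_upwards [eventually_ne_atTop 0] with n hn
  have hlin := natCast_mul_div_sqrt hn δ
  have hsq := natCast_mul_div_sqrt_sq hn δ
  simp only [g]
  linear_combination (-deriv φ 0) * hlin - (deriv (deriv φ) 0 / 2) * hsq

theorem cgf_clt_limit
    (φ : ℝ → ℝ) (hφ0 : φ 0 = 0)
    (hφdiff : Differentiable ℝ φ)
    (hφdiff2 : DifferentiableAt ℝ (deriv φ) 0)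
    (u v : ℝ → ℝ)
    (hu : Tendsto u (nhds 0) (nhds 0)) (hv : Tendsto v (nhds 0) (nhds 0))
    (φn : ℕ → ℝ → ℝ)
    (hsandwich : ∀ n : ℕ, ∀ θ : ℝ,
      (n : ℝ) * φ θ + u θ ≤ φn n θ ∧ φn n θ ≤ (n : ℝ) * φ θ + v θ)
    (δ : ℝ) :
    Tendsto
      (fun n : ℕ => φn n (δ / Real.sqrt n) - δ * Real.sqrt n * deriv φ 0)
      atTop (nhds (δ ^ 2 / 2 * deriv (deriv φ) 0)) := by
  have hmain := tendsto_natCast_mul_div_sqrt_sub hφ0 hφdiff hφdiff2 δ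
  have ht := tendsto_div_sqrt_natCast_atTop δ
  have hlow := hmain.add (hu.comp ht)
  have hhigh := hmain.add (hv.comp ht)
  rw [add_zero] at hlow hhigh
  refine tendsto_of_tendsto_of_tendsto_of_le_of_le hlow hhigh (fun n => ?_) (fun n => ?_)
  · simp only [Function.comp_apply]
    linarith [(hsandwich n (δ / √n)).1]
  · simp only [Function.comp_apply]
    linarith [(hsandwich n (δ / √n)).2]
end
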